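/- arXiv:1809.08756 — 6 statements merged into one kernel-verified Lean document; each statement's English description precedes it below -/
import Mathlib

section
/- Let n ≥ 2k and let A₁, ..., Aₘ be families of k-element subsets of [n] that are pairwise cross-intersecting (A ∩ B ≠ ∅ for all A ∈ Aᵢ, B ∈ Aⱼ with i ≠ j). Then Σᵢ |Aᵢ| ≤ C(n,k) if m ≤ n/k, and Σᵢ |Aᵢ| ≤ m·C(n-1,k-1) if m ≥ n/k. -/
/-!
Katona's circle method. Arrange `[n]` around a cycle by a bijection `σ : ℤ/n ≃ [n]`. For fixed
`σ`, the positions `t` whose arc `σ {t, …, t+k-1}` lies in `Aᵢ` form sets `Sᵢ` of positions whose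
arcs meet across different `i`. Two nonempty such sets satisfy `|S| + |T| ≤ 2k`: for `n = 2k`
because `S` and `T - k` are disjoint, and for `n > 2k` because some point of the cycle lies in
neither set, and deleting it shortens the cycle while keeping the arcs meeting. Hence
`∑ |Sᵢ| ≤ max(n, mk)`: either one `Sᵢ` carries everything, or all but one `|Sᵢ|` are at most `k`
and the largest pairs with another to at most `2k`. Each `k`-set is the arc at a given position
for at least `k! (n-k)!` of the `n!` arrangements, so averaging over `σ` gives
`n ∑ |Aᵢ| ≤ C(n,k) max(n, mk)`, and both bounds follow.
-/

open Finset

/-- For positions `s t < n` of the cycle `ℤ/n`: one of `s - t`, `t - s` is less than `k` modulo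
`n`, i.e. the arcs of length `k` starting at `s` and at `t` meet. -/
def ArcsMeet (n k s t : ℕ) : Prop := (n + s - t) % n < k ∨ (n + t - s) % n < k

theorem ArcsMeet.symm {n k s t : ℕ} (h : ArcsMeet n k s t) : ArcsMeet n k t s := Or.symm h

theorem Nat.mod_eq_self_or_sub_of_lt_two_mul (x n : ℕ) (h : x < 2 * n) :
    (x < n ∧ x % n = x) ∨ (n ≤ x ∧ x % n = x - n) := by
  rcases lt_or_ge x n with hx | hx
  · exact .inl ⟨hx, Nat.mod_eq_of_lt hx⟩
  · exact .inr ⟨hx, by rw [Nat.mod_eq_sub_mod hx, Nat.mod_eq_of_lt (by omega)]⟩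

theorem arcsMeet_of_add_mod_eq {n k s t a b : ℕ} (hkn : k ≤ n) (hs : s < n) (ht : t < n)
    (ha : a < k) (hb : b < k) (h : (s + a) % n = (t + b) % n) : ArcsMeet n k s t := by
  unfold ArcsMeet
  have := Nat.mod_eq_self_or_sub_of_lt_two_mul (s + a) n (by omega)
  have := Nat.mod_eq_self_or_sub_of_lt_two_mul (t + b) n (by omega)
  have := Nat.mod_eq_self_or_sub_of_lt_two_mul (n + s - t) n (by omega)
  have := Nat.mod_eq_self_or_sub_of_lt_two_mul (n + t - s) n (by omega)
  omega

theorem not_arcsMeet_add_mod {n k x d : ℕ} (hx : x < n) (hkd : k ≤ d) (hdn : d + k ≤ n) :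
    ¬ ArcsMeet n k x ((x + d) % n) := by
  have hy := Nat.mod_eq_self_or_sub_of_lt_two_mul (x + d) n (by omega)
  generalize (x + d) % n = y at hy ⊢
  unfold ArcsMeet
  have := Nat.mod_eq_self_or_sub_of_lt_two_mul (n + x - y) n (by omega)
  have := Nat.mod_eq_self_or_sub_of_lt_two_mul (n + y - x) n (by omega)
  omega

theorem ArcsMeet.deletePoint {n k s t z : ℕ} (hs : s < n) (ht : t < n) (hz : z < n)
    (hsz : s ≠ z) (htz : t ≠ z) (h : ArcsMeet n k s t) :
    ArcsMeet (n - 1) k (if s < z then s else s - 1) (if t < z then t else t - 1) := by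
  unfold ArcsMeet at h ⊢
  generalize hs' : (if s < z then s else s - 1) = s'
  generalize ht' : (if t < z then t else t - 1) = t'
  have hs'' : (s < z ∧ s' = s) ∨ (z < s ∧ s' = s - 1) := by split_ifs at hs' <;> omega
  have ht'' : (t < z ∧ t' = t) ∨ (z < t ∧ t' = t - 1) := by split_ifs at ht' <;> omega
  have := Nat.mod_eq_self_or_sub_of_lt_two_mul (n + s - t) n (by omega)
  have := Nat.mod_eq_self_or_sub_of_lt_two_mul (n + t - s) n (by omega)
  have := Nat.mod_eq_self_or_sub_of_lt_two_mul (n - 1 + s' - t') (n - 1) (by omega)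
  have := Nat.mod_eq_self_or_sub_of_lt_two_mul (n - 1 + t' - s') (n - 1) (by omega)
  omega

theorem card_add_card_le_of_arcsMeet {n k : ℕ} (hkn : 2 * k ≤ n) {S T : Finset ℕ}
    (hS : ∀ s ∈ S, s < n) (hT : ∀ t ∈ T, t < n) (hST : ∀ s ∈ S, ∀ t ∈ T, ArcsMeet n k s t) :
    #S + #T ≤ n := by
  -- the arcs at `x` and `x + k` are disjoint, so `S` misses `T - k`
  set shift : ℕ → ℕ := fun t => (t + (n - k)) % n
  have hdisj : Disjoint S (T.image shift) := by
    refine disjoint_left.mpr fun x hxS hx => ?_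
    obtain ⟨t, ht, rfl⟩ := mem_image.mp hx
    exact not_arcsMeet_add_mod (hT t ht) (by omega) (by omega) (hST _ hxS t ht).symm
  have hinj : Set.InjOn shift T := fun a ha b hb hab =>
    (Nat.ModEq.add_right_cancel' _ hab).eq_of_lt_of_lt (hT a ha) (hT b hb)
  calc #S + #T = #(S ∪ T.image shift) := by
        rw [card_union_of_disjoint hdisj, card_image_of_injOn hinj]
    _ ≤ #(range n) := card_le_card fun x hx => by
        rcases mem_union.mp hx with hx | hx
        · exact mem_range.mpr (hS x hx)
        · obtain ⟨t, ht, rfl⟩ := mem_image.mp hx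
          exact mem_range.mpr (Nat.mod_lt _ (by have := hT t ht; omega))
    _ = n := card_range n

theorem exists_notMem_of_arcsMeet {n k : ℕ} (hkn : 2 * k < n) {S T : Finset ℕ}
    (hS : ∀ s ∈ S, s < n) (hT : ∀ t ∈ T, t < n) (hSne : S.Nonempty) (hTne : T.Nonempty)
    (hST : ∀ s ∈ S, ∀ t ∈ T, ArcsMeet n k s t) : ∃ z < n, z ∉ S ∧ z ∉ T := by
  by_contra! hcover
  have hstep : ∀ x ∈ S, ∀ d, k ≤ d → d + k ≤ n → (x + d) % n ∈ S := fun x hx d hkd hdn => by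
    by_contra hxd
    exact not_arcsMeet_add_mod (hS x hx) hkd hdn
      (hST x hx _ (hcover _ (Nat.mod_lt _ (by omega)) hxd))
  -- `+1 = +(k+1) + (n-k)` modulo `n`
  have hsucc : ∀ x ∈ S, (x + 1) % n ∈ S := fun x hx => by
    have := hstep _ (hstep x hx (k + 1) (by omega) (by omega)) (n - k) (by omega) (by omega)
    rwa [Nat.mod_add_mod, show x + (k + 1) + (n - k) = x + 1 + n by omega, Nat.add_mod_right]
      at this
  obtain ⟨s, hs⟩ := hSne
  have hall : ∀ j, (s + j) % n ∈ S := by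
    intro j
    induction j with
    | zero => simpa [Nat.mod_eq_of_lt (hS s hs)] using hs
    | succ j ih => simpa only [Nat.mod_add_mod, add_assoc] using hsucc _ ih
  obtain ⟨t, ht⟩ := hTne
  have htk := hall (n - s + t + k)
  rw [show s + (n - s + t + k) = t + k + n by have := hS s hs; omega, Nat.add_mod_right] at htk
  exact not_arcsMeet_add_mod (hT t ht) le_rfl (by omega) (hST _ htk t ht).symm

theorem card_add_card_le_two_mul_of_arcsMeet {n k : ℕ} (hkn : 2 * k ≤ n) {S T : Finset ℕ}
    (hS : ∀ s ∈ S, s < n) (hT : ∀ t ∈ T, t < n) (hSne : S.Nonempty) (hTne : T.Nonempty)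
    (hST : ∀ s ∈ S, ∀ t ∈ T, ArcsMeet n k s t) : #S + #T ≤ 2 * k := by
  induction n using Nat.strong_induction_on generalizing S T with
  | _ n ih =>
  rcases hkn.eq_or_lt with rfl | hkn
  · exact card_add_card_le_of_arcsMeet le_rfl hS hT hST
  -- delete a point `z` lying in neither family, shrinking the cycle to length `n - 1`
  obtain ⟨z, hz, hzS, hzT⟩ := exists_notMem_of_arcsMeet hkn hS hT hSne hTne hST
  set del : ℕ → ℕ := fun w => if w < z then w else w - 1
  have hdel_lt : ∀ U : Finset ℕ, (∀ u ∈ U, u < n) → z ∉ U → ∀ u ∈ U.image del, u < n - 1 := by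
    intro U hU hzU x hx
    obtain ⟨u, hu, rfl⟩ := mem_image.mp hx
    have := hU u hu
    have : u ≠ z := ne_of_mem_of_not_mem hu hzU
    simp only [del]
    split_ifs <;> omega
  have hdel_inj : ∀ U : Finset ℕ, z ∉ U → Set.InjOn del U := by
    intro U hzU a ha b hb hab
    have : a ≠ z := ne_of_mem_of_not_mem ha hzU
    have : b ≠ z := ne_of_mem_of_not_mem hb hzU
    simp only [del] at hab
    split_ifs at hab <;> omega
  have hST' : ∀ s ∈ S.image del, ∀ t ∈ T.image del, ArcsMeet (n - 1) k s t := by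
    simp only [mem_image]
    rintro _ ⟨s, hs, rfl⟩ _ ⟨t, ht, rfl⟩
    exact (hST s hs t ht).deletePoint (hS s hs) (hT t ht) hz
      (ne_of_mem_of_not_mem hs hzS) (ne_of_mem_of_not_mem ht hzT)
  have := ih (n - 1) (by omega) (by omega) (hdel_lt S hS hzS) (hdel_lt T hT hzT)
    (hSne.image del) (hTne.image del) hST'
  rwa [card_image_of_injOn (hdel_inj S hzS), card_image_of_injOn (hdel_inj T hzT)] at this

theorem sum_le_max_of_add_le {ι : Type*} [Fintype ι] [DecidableEq ι] {n k : ℕ} (c : ι → ℕ)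
    (hc : ∀ i, c i ≤ n) (hpair : ∀ i j, i ≠ j → c i ≠ 0 → c j ≠ 0 → c i + c j ≤ 2 * k) :
    ∑ i, c i ≤ max n (Fintype.card ι * k) := by
  by_cases hsmall : ∀ i, c i ≤ k
  · exact le_max_of_le_right (by simpa using sum_le_card_nsmul univ c k fun i _ => hsmall i)
  push Not at hsmall
  obtain ⟨i, hi⟩ := hsmall
  by_cases hsingle : ∀ j ≠ i, c j = 0
  · rw [Fintype.sum_eq_single i hsingle]
    exact le_max_of_le_left (hc i)
  push Not at hsingle
  obtain ⟨j, hji, hj⟩ := hsingle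
  -- every other `c l` is either `0` or at most `2k - c i < k`
  have hrest : ∀ l ∈ ({i, j} : Finset ι)ᶜ, c l ≤ k := by
    intro l hl
    simp only [mem_compl, mem_insert, mem_singleton, not_or] at hl
    by_cases hl0 : c l = 0
    · omega
    · have := hpair i l (Ne.symm hl.1) (by omega) hl0
      omega
  have hcard : #({i, j} : Finset ι)ᶜ = Fintype.card ι - 2 := by
    rw [card_compl, card_pair hji.symm]
  have htwo : 2 ≤ Fintype.card ι := by
    simpa [card_pair hji.symm] using card_le_univ ({i, j} : Finset ι)
  calc ∑ l, c l = (c i + c j) + ∑ l ∈ ({i, j} : Finset ι)ᶜ, c l := by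
        rw [← sum_add_sum_compl {i, j}, sum_pair hji.symm]
    _ ≤ 2 * k + (Fintype.card ι - 2) * k := by
        gcongr
        · exact hpair i j hji.symm (by omega) hj
        · exact (sum_le_card_nsmul _ c k hrest).trans_eq (by rw [hcard, smul_eq_mul])
    _ = Fintype.card ι * k := by
        rw [← add_mul]; congr 1; omega
    _ ≤ max n (Fintype.card ι * k) := le_max_right _ _

theorem sum_card_le_max_of_arcsMeet {ι : Type*} [Fintype ι] [DecidableEq ι] {n k : ℕ}
    (hkn : 2 * k ≤ n) (S : ι → Finset ℕ) (hS : ∀ i, ∀ s ∈ S i, s < n)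
    (hST : ∀ i j, i ≠ j → ∀ s ∈ S i, ∀ t ∈ S j, ArcsMeet n k s t) :
    ∑ i, #(S i) ≤ max n (Fintype.card ι * k) := by
  refine sum_le_max_of_add_le _ (fun i => ?_) fun i j hij hi hj => ?_
  · simpa using card_le_card fun s hs => mem_range.mpr (hS i s hs)
  · exact card_add_card_le_two_mul_of_arcsMeet hkn (hS i) (hS j)
      (card_ne_zero.mp hi) (card_ne_zero.mp hj) (hST i j hij)

theorem factorial_mul_factorial_le_card_image_eq {α β : Type*} [Fintype α] [Fintype β]
    [DecidableEq α] [DecidableEq β] {W : Finset α} {B : Finset β} (hWB : #W = #B)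
    (hαβ : Fintype.card α = Fintype.card β) :
    (#W).factorial * (Fintype.card α - #W).factorial ≤ #{σ : α ≃ β | W.image σ = B} := by
  have hin : Fintype.card {x // x ∈ W} = Fintype.card {y // y ∈ B} := by simpa using hWB
  have hout : Fintype.card {x // x ∉ W} = Fintype.card {y // y ∉ B} := by
    simp [Fintype.card_subtype_compl, hWB, hαβ]
  -- glue a bijection `W ≃ B` with a bijection `Wᶜ ≃ Bᶜ`
  let glue (e : ({x // x ∈ W} ≃ {y // y ∈ B}) × ({x // x ∉ W} ≃ {y // y ∉ B})) : α ≃ β :=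
    (Equiv.sumCompl _).symm.trans ((e.1.sumCongr e.2).trans (Equiv.sumCompl _))
  have glue_mem e x (hx : x ∈ W) : glue e x = e.1 ⟨x, hx⟩ := by
    simp [glue, Equiv.sumCompl_symm_apply_of_pos hx]
  have glue_notMem e x (hx : x ∉ W) : glue e x = e.2 ⟨x, hx⟩ := by
    simp [glue, Equiv.sumCompl_symm_apply_of_neg hx]
  have hglue : Function.Injective glue := fun e f hef => by
    ext x
    · simpa [glue_mem _ x x.2] using congr($hef x)
    · simpa [glue_notMem _ x x.2] using congr($hef x)
  calc (#W).factorial * (Fintype.card α - #W).factorial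
      = Fintype.card (({x // x ∈ W} ≃ {y // y ∈ B}) × ({x // x ∉ W} ≃ {y // y ∉ B})) := by
        rw [Fintype.card_prod, Fintype.card_equiv (Fintype.equivOfCardEq hin),
          Fintype.card_equiv (Fintype.equivOfCardEq hout)]
        simp [Fintype.card_subtype_compl]
    _ ≤ #{σ : α ≃ β | W.image σ = B} := by
        refine card_le_card_of_injOn glue (fun e _ => mem_filter.mpr ⟨mem_univ _, ?_⟩)
          hglue.injOn
        refine eq_of_subset_of_card_le (fun y hy => ?_) ?_
        · obtain ⟨x, hx, rfl⟩ := mem_image.mp hy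
          simp [glue_mem e x hx]
        · rw [card_image_of_injective _ (glue e).injective, hWB]

def cyclicArc {n : ℕ} (k : ℕ) (t : ZMod n) : Finset (ZMod n) :=
  (range k).image fun j : ℕ => t + (j : ZMod n)

theorem card_cyclicArc {n k : ℕ} (hkn : k ≤ n) (t : ZMod n) : #(cyclicArc k t) = k := by
  rw [cyclicArc, card_image_of_injOn, card_range]
  intro a ha b hb hab
  have := congrArg ZMod.val (add_left_cancel hab)
  simp only [coe_range, Set.mem_Iio] at ha hb
  rwa [ZMod.val_natCast_of_lt (by omega), ZMod.val_natCast_of_lt (by omega)] at this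

theorem arcsMeet_val_of_cyclicArc_inter {n k : ℕ} [NeZero n] (hkn : k ≤ n) {t t' : ZMod n}
    (h : (cyclicArc k t ∩ cyclicArc k t').Nonempty) : ArcsMeet n k t.val t'.val := by
  obtain ⟨x, hx⟩ := h
  simp only [cyclicArc, mem_inter, mem_image, mem_range] at hx
  obtain ⟨⟨a, ha, rfl⟩, ⟨b, hb, hab⟩⟩ := hx
  refine arcsMeet_of_add_mod_eq hkn (ZMod.val_lt t) (ZMod.val_lt t') ha hb ?_
  simpa [ZMod.val_add, ZMod.val_natCast] using congrArg ZMod.val hab.symm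

theorem sum_card_filter_cyclicArc_mem_le {ι β : Type*} [Fintype ι] [DecidableEq ι] [DecidableEq β]
    {n k : ℕ} [NeZero n] (hkn : 2 * k ≤ n) (A : ι → Finset (Finset β))
    (hcross : ∀ i j, i ≠ j → ∀ a ∈ A i, ∀ b ∈ A j, (a ∩ b).Nonempty) (σ : ZMod n ≃ β) :
    ∑ i, #{t | (cyclicArc k t).image σ ∈ A i} ≤ max n (Fintype.card ι * k) := by
  have hval (i : ι) : #{t | (cyclicArc k t).image σ ∈ A i} =
      #(({t | (cyclicArc k t).image σ ∈ A i} : Finset (ZMod n)).image ZMod.val) :=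
    (card_image_of_injective _ (ZMod.val_injective n)).symm
  simp only [hval]
  refine sum_card_le_max_of_arcsMeet hkn _ (fun i s hs => ?_) fun i j hij s hs t ht => ?_
  · obtain ⟨u, -, rfl⟩ := mem_image.mp hs
    exact ZMod.val_lt u
  · simp only [mem_image, mem_filter, mem_univ, true_and] at hs ht
    obtain ⟨u, hu, rfl⟩ := hs
    obtain ⟨v, hv, rfl⟩ := ht
    refine arcsMeet_val_of_cyclicArc_inter (by omega) ?_
    have := hcross i j hij _ hu _ hv
    rwa [← image_inter _ _ σ.injective, image_nonempty] at this

theorem card_mul_le_card_filter_cyclicArc_mem {n k : ℕ} [NeZero n] (hkn : k ≤ n) (t : ZMod n)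
    (A : Finset (Finset (Fin n))) (huniform : ∀ a ∈ A, #a = k) :
    #A * (k.factorial * (n - k).factorial) ≤
      #{σ : ZMod n ≃ Fin n | (cyclicArc k t).image σ ∈ A} := by
  calc #A * (k.factorial * (n - k).factorial) = ∑ _B ∈ A, k.factorial * (n - k).factorial := by
        rw [sum_const, smul_eq_mul]
    _ ≤ ∑ B ∈ A, #{σ : ZMod n ≃ Fin n | (cyclicArc k t).image σ = B} := sum_le_sum fun B hB => by
        have := factorial_mul_factorial_le_card_image_eq (W := cyclicArc k t) (B := B)
          (by rw [card_cyclicArc hkn, huniform B hB]) (by simp)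
        rwa [card_cyclicArc hkn, ZMod.card] at this
    _ = #{σ : ZMod n ≃ Fin n | (cyclicArc k t).image σ ∈ A} := by
        simp only [card_filter]
        rw [sum_comm]
        simp

theorem sum_card_mul_le_choose_mul_max {ι : Type*} [Fintype ι] [DecidableEq ι] {n k : ℕ}
    (hkn : 2 * k ≤ n) (A : ι → Finset (Finset (Fin n))) (huniform : ∀ i, ∀ a ∈ A i, #a = k)
    (hcross : ∀ i j, i ≠ j → ∀ a ∈ A i, ∀ b ∈ A j, (a ∩ b).Nonempty) :
    (∑ i, #(A i)) * n ≤ n.choose k * max n (Fintype.card ι * k) := by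
  rcases Nat.eq_zero_or_pos n with rfl | hn
  · simp
  have : NeZero n := ⟨hn.ne'⟩
  set K := k.factorial * (n - k).factorial
  have hK : 0 < K := by positivity
  -- count triples `(i, t, σ)` such that the cyclicArc at `t` of the arrangement `σ` lies in `A i`
  have hcount : (∑ i, #(A i)) * n * K ≤ n.factorial * max n (Fintype.card ι * k) :=
    calc (∑ i, #(A i)) * n * K = ∑ i, ∑ _t : ZMod n, #(A i) * K := by
          simp only [sum_mul, sum_const, card_univ, ZMod.card, smul_eq_mul]
          exact sum_congr rfl fun i _ => by ring
      _ ≤ ∑ i, ∑ t : ZMod n, #{σ : ZMod n ≃ Fin n | (cyclicArc k t).image σ ∈ A i} :=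
          sum_le_sum fun i _ => sum_le_sum fun t _ =>
            card_mul_le_card_filter_cyclicArc_mem (by omega) t (A i) (huniform i)
      _ = ∑ σ : ZMod n ≃ Fin n, ∑ i, #{t | (cyclicArc k t).image σ ∈ A i} := by
          simp only [card_filter]
          exact (sum_congr rfl fun _ _ => sum_comm).trans sum_comm
      _ ≤ ∑ _σ : ZMod n ≃ Fin n, max n (Fintype.card ι * k) :=
          sum_le_sum fun σ _ => sum_card_filter_cyclicArc_mem_le hkn A hcross σ
      _ = n.factorial * max n (Fintype.card ι * k) := by
          rw [sum_const, card_univ, Fintype.card_equiv (Fintype.equivOfCardEq (by simp)),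
            ZMod.card, smul_eq_mul]
  refine Nat.le_of_mul_le_mul_right (hcount.trans_eq ?_) hK
  rw [← Nat.choose_mul_factorial_mul_factorial (by omega : k ≤ n)]
  ring

theorem stmt1 (n k m : ℕ) (hk : 1 ≤ k) (hnk : 2 * k ≤ n)
    (A : Fin m → Finset (Finset (Fin n)))
    (huniform : ∀ i, ∀ a ∈ A i, a.card = k)
    (hcross : ∀ i j : Fin m, i ≠ j → ∀ a ∈ A i, ∀ b ∈ A j, (a ∩ b).Nonempty) :
    ((m : ℚ) ≤ (n : ℚ) / (k : ℚ) → ∑ i, (A i).card ≤ n.choose k) ∧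
    ((n : ℚ) / (k : ℚ) ≤ (m : ℚ) → ∑ i, (A i).card ≤ m * (n - 1).choose (k - 1)) := by
  have hkatona := sum_card_mul_le_choose_mul_max hnk A huniform hcross
  rw [Fintype.card_fin] at hkatona
  have hn : 0 < n := by omega
  have hk' : (0 : ℚ) < k := by exact_mod_cast hk
  constructor
  · intro hm
    have hmk : m * k ≤ n := by exact_mod_cast (le_div_iff₀ hk').mp hm
    rw [max_eq_left hmk] at hkatona
    exact Nat.le_of_mul_le_mul_right hkatona hn
  · intro hm
    have hmk : n ≤ m * k := by exact_mod_cast (div_le_iff₀ hk').mp hm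
    rw [max_eq_right hmk] at hkatona
    have hchoose := Nat.add_one_mul_choose_eq (n - 1) (k - 1)
    rw [Nat.sub_add_cancel hn, Nat.sub_add_cancel hk] at hchoose
    refine Nat.le_of_mul_le_mul_right (hkatona.trans_eq ?_) hn
    calc n.choose k * (m * k) = m * (n.choose k * k) := by ring
      _ = m * (n - 1).choose (k - 1) * n := by rw [← hchoose]; ring
end

section
/- Let n ≥ 2k and let A, B be nonempty families of k-element subsets of [n] such that every member of A intersects every member of B. Then |A| + |B| ≤ C(n,k) − C(n−k, k) + 1. -/
/-!
Induction on the ground set `s = insert x t`. The compressions `𝓒 {i} {x}`, `i ∈ t`, preserve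
sizes, cross-intersection and the ground set, so we may assume both families are stable under
them. Split each family into its members avoiding `x` and the traces on `t` of its members
through `x`. The avoiding parts are nonempty and cross-intersecting on `t`, so induction bounds
them. Stability makes the two trace families cross-intersecting too, and each meets a fixed
`k`-set of the other side; this bounds their sum by induction when both are nonempty, and
otherwise by counting the `(k - 1)`-sets that avoid a fixed `k`-set. Pascal's rule adds the two
bounds up. The induction bottoms out at `|s| = 2k`, where `b ↦ s \ b` injects `ℬ` into the
complement of `𝒜`.
-/

open Finset UV
open scoped FinsetFamily

namespace Finset

variable {α : Type*} [DecidableEq α] {𝒜 ℬ : Finset (Finset α)} {s t a b c : Finset α} {i x : α}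
  {k r : ℕ}

def CrossIntersecting (𝒜 ℬ : Finset (Finset α)) : Prop :=
  ∀ a ∈ 𝒜, ∀ b ∈ ℬ, (a ∩ b).Nonempty

namespace CrossIntersecting

lemma symm (h : CrossIntersecting 𝒜 ℬ) : CrossIntersecting ℬ 𝒜 :=
  fun b hb a ha => inter_comm a b ▸ h a ha b hb

lemma mono {𝒜' ℬ' : Finset (Finset α)} (h : CrossIntersecting 𝒜 ℬ) (h𝒜 : 𝒜' ⊆ 𝒜)
    (hℬ : ℬ' ⊆ ℬ) : CrossIntersecting 𝒜' ℬ' :=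
  fun a ha b hb => h a (h𝒜 ha) b (hℬ hb)

lemma pos_of_subset_powersetCard (h : CrossIntersecting 𝒜 ℬ) (h𝒜 : 𝒜 ⊆ powersetCard k s)
    (h𝒜ne : 𝒜.Nonempty) (hℬne : ℬ.Nonempty) : 0 < k := by
  obtain ⟨a, ha⟩ := h𝒜ne
  obtain ⟨b, hb⟩ := hℬne
  rw [← (mem_powersetCard.1 (h𝒜 ha)).2]
  exact card_pos.2 ((h a ha b hb).mono inter_subset_left)

lemma inter_nonempty_of_mem_uvCompression (h : CrossIntersecting 𝒜 ℬ) {j : α} (ha : a ∈ 𝒜)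
    (hca : compress {i} {j} a ∈ 𝒜) (hb : b ∈ 𝓒 {i} {j} ℬ) (hbℬ : b ∉ ℬ) :
    (a ∩ b).Nonempty := by
  have hib : i ∈ b := singleton_subset_iff.1 (le_of_mem_compression_of_notMem hb hbℬ)
  have hb' : (b ∪ {j}) \ {i} ∈ ℬ := sup_sdiff_mem_of_mem_compression_of_notMem hb hbℬ
  obtain ⟨z, hz⟩ := h a ha _ hb'
  simp only [mem_inter, mem_sdiff, mem_union, mem_singleton] at hz
  obtain ⟨hza, hzb | rfl, -⟩ := hz
  · exact ⟨z, mem_inter.2 ⟨hza, hzb⟩⟩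
  by_cases hia : i ∈ a
  · exact ⟨i, mem_inter.2 ⟨hia, hib⟩⟩
  -- the shift `(a ∪ {i}) \ {j} ∈ 𝒜` meets the preimage of `b` away from `i` and `j`
  rw [compress_of_disjoint_of_le (disjoint_singleton_left.2 hia) (singleton_subset_iff.2 hza)]
    at hca
  obtain ⟨y, hy⟩ := h _ hca _ hb'
  simp only [mem_inter, mem_sdiff, sup_eq_union, mem_union, mem_singleton] at hy
  obtain ⟨⟨hya | rfl, hyj⟩, hyb | rfl, hyi⟩ := hy
  · exact ⟨y, mem_inter.2 ⟨hya, hyb⟩⟩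
  all_goals tauto

lemma uvCompression (h : CrossIntersecting 𝒜 ℬ) (i j : α) :
    CrossIntersecting (𝓒 {i} {j} 𝒜) (𝓒 {i} {j} ℬ) := by
  intro a ha b hb
  have compress_mem {𝒞 : Finset (Finset α)} {c} (hc : c ∈ 𝓒 {i} {j} 𝒞) (hc𝒞 : c ∈ 𝒞) :
      compress {i} {j} c ∈ 𝒞 :=
    ((mem_compression.1 hc).resolve_right fun h => h.1 hc𝒞).2
  by_cases ha𝒜 : a ∈ 𝒜 <;> by_cases hbℬ : b ∈ ℬ
  · exact h a ha𝒜 b hbℬ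
  · exact h.inter_nonempty_of_mem_uvCompression ha𝒜 (compress_mem ha ha𝒜) hb hbℬ
  · exact inter_comm a b ▸
      h.symm.inter_nonempty_of_mem_uvCompression hbℬ (compress_mem hb hbℬ) ha ha𝒜
  · exact ⟨i, mem_inter.2 ⟨singleton_subset_iff.1 (le_of_mem_compression_of_notMem ha ha𝒜),
      singleton_subset_iff.1 (le_of_mem_compression_of_notMem hb hbℬ)⟩⟩

lemma memberSubfamily_nonMemberSubfamily (h : CrossIntersecting 𝒜 ℬ) :
    CrossIntersecting (memberSubfamily x 𝒜) (nonMemberSubfamily x ℬ) := by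
  intro c hc b hb
  rw [mem_memberSubfamily] at hc
  rw [mem_nonMemberSubfamily] at hb
  obtain ⟨z, hz⟩ := h _ hc.1 b hb.1
  rw [mem_inter, mem_insert] at hz
  obtain ⟨rfl | hzc, hzb⟩ := hz
  · exact absurd hzb hb.2
  · exact ⟨z, mem_inter.2 ⟨hzc, hzb⟩⟩

lemma nonMemberSubfamily (h : CrossIntersecting 𝒜 ℬ) :
    CrossIntersecting (nonMemberSubfamily x 𝒜) (nonMemberSubfamily x ℬ) :=
  h.mono (fun _ ha => (mem_nonMemberSubfamily.1 ha).1) fun _ hb => (mem_nonMemberSubfamily.1 hb).1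

end CrossIntersecting

lemma uvCompression_subset_powersetCard {u v : Finset α} (hus : u ⊆ s) (huv : #u = #v)
    (h𝒜 : 𝒜 ⊆ powersetCard k s) : 𝓒 u v 𝒜 ⊆ powersetCard k s := by
  intro a ha
  rcases mem_compression.1 ha with ⟨ha𝒜, -⟩ | ⟨-, b, hb, rfl⟩
  · exact h𝒜 ha𝒜
  obtain ⟨hbs, hbk⟩ := mem_powersetCard.1 (h𝒜 hb)
  refine mem_powersetCard.2 ⟨?_, (card_compress huv b).trans hbk⟩
  unfold compress
  split_ifs
  · exact sdiff_subset.trans (union_subset hbs hus)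
  · exact hbs

lemma filter_mem_uvCompression_subset :
    {a ∈ 𝓒 {i} {x} 𝒜 | x ∈ a} ⊆ {a ∈ 𝒜 | x ∈ a} := by
  intro a ha
  rw [mem_filter] at ha ⊢
  exact ⟨mem_of_mem_compression ha.1 (singleton_subset_iff.2 ha.2)
    fun h => absurd h (singleton_ne_empty x), ha.2⟩

lemma filter_mem_uvCompression_ssubset (h : 𝓒 {i} {x} 𝒜 ≠ 𝒜) :
    {a ∈ 𝓒 {i} {x} 𝒜 | x ∈ a} ⊂ {a ∈ 𝒜 | x ∈ a} := by
  refine (ssubset_iff_of_subset filter_mem_uvCompression_subset).2 ?_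
  obtain ⟨a, ha, hna⟩ := not_subset.1 fun hsub =>
    h (eq_of_subset_of_card_le hsub (card_compression _ _ _).le).symm
  refine ⟨a, mem_filter.2 ⟨ha, ?_⟩, fun h' => hna (mem_filter.1 h').1⟩
  by_contra hxa
  have : compress {i} {x} a = a := by
    rw [compress, if_neg fun h' => hxa (singleton_subset_iff.1 h'.2)]
  exact hna (this ▸ compress_mem_compression ha)

lemma exists_isCompressed_of_forall_uvCompression (s : Finset α) (x : α)
    (P : Finset (Finset α) → Finset (Finset α) → Prop)
    (hP : ∀ i ∈ s, ∀ 𝒜 ℬ, P 𝒜 ℬ → P (𝓒 {i} {x} 𝒜) (𝓒 {i} {x} ℬ)) (h : P 𝒜 ℬ) :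
    ∃ 𝒜' ℬ', P 𝒜' ℬ' ∧ #𝒜' = #𝒜 ∧ #ℬ' = #ℬ ∧
      ∀ i ∈ s, IsCompressed {i} {x} 𝒜' ∧ IsCompressed {i} {x} ℬ' := by
  induction hm : #{a ∈ 𝒜 | x ∈ a} + #{b ∈ ℬ | x ∈ b} using Nat.strong_induction_on
    generalizing 𝒜 ℬ with
  | _ m ih =>
  by_cases hc : ∀ i ∈ s, IsCompressed {i} {x} 𝒜 ∧ IsCompressed {i} {x} ℬ
  · exact ⟨𝒜, ℬ, h, rfl, rfl, hc⟩
  obtain ⟨i, hi, hne⟩ : ∃ i ∈ s, 𝓒 {i} {x} 𝒜 ≠ 𝒜 ∨ 𝓒 {i} {x} ℬ ≠ ℬ := by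
    simpa only [IsCompressed, not_forall, not_and_or, exists_prop] using hc
  have hlt : #{a ∈ 𝓒 {i} {x} 𝒜 | x ∈ a} + #{b ∈ 𝓒 {i} {x} ℬ | x ∈ b} < m := by
    have h𝒜 := card_le_card (filter_mem_uvCompression_subset (𝒜 := 𝒜) (i := i) (x := x))
    have hℬ := card_le_card (filter_mem_uvCompression_subset (𝒜 := ℬ) (i := i) (x := x))
    rcases hne with hne | hne
    · have := card_lt_card (filter_mem_uvCompression_ssubset hne)
      omega
    · have := card_lt_card (filter_mem_uvCompression_ssubset hne)
      omega
  obtain ⟨𝒜', ℬ', hP', h𝒜', hℬ', hc'⟩ := ih _ hlt (hP i hi _ _ h) rfl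
  exact ⟨𝒜', ℬ', hP', h𝒜'.trans (card_compression _ _ _), hℬ'.trans (card_compression _ _ _), hc'⟩

lemma _root_.UV.IsCompressed.insert_mem (h : IsCompressed {i} {x} 𝒜) (hc : insert x c ∈ 𝒜)
    (hxc : x ∉ c) (hic : i ∉ c) (hix : i ≠ x) : insert i c ∈ 𝒜 := by
  have := sup_sdiff_mem_of_mem_compression (h.eq.symm ▸ hc)
    (singleton_subset_iff.2 (mem_insert_self x c)) (by simp [hic, hix])
  convert this using 1
  ext y
  simp only [mem_insert, sup_eq_union, mem_sdiff, mem_union, mem_singleton]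
  grind

lemma nonMemberSubfamily_subset_powersetCard (h𝒜 : 𝒜 ⊆ powersetCard k (insert x t)) :
    nonMemberSubfamily x 𝒜 ⊆ powersetCard k t := by
  intro a ha
  rw [mem_nonMemberSubfamily] at ha
  obtain ⟨has, hak⟩ := mem_powersetCard.1 (h𝒜 ha.1)
  exact mem_powersetCard.2 ⟨(subset_insert_iff_of_notMem ha.2).1 has, hak⟩

lemma memberSubfamily_subset_powersetCard (h𝒜 : 𝒜 ⊆ powersetCard (k + 1) (insert x t)) :
    memberSubfamily x 𝒜 ⊆ powersetCard k t := by
  intro c hc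
  rw [mem_memberSubfamily] at hc
  obtain ⟨hcs, hck⟩ := mem_powersetCard.1 (h𝒜 hc.1)
  rw [card_insert_of_notMem hc.2, Nat.add_right_cancel_iff] at hck
  exact mem_powersetCard.2
    ⟨(subset_insert_iff_of_notMem hc.2).1 ((subset_insert x c).trans hcs), hck⟩

lemma nonMemberSubfamily_nonempty_of_isCompressed (hx : x ∉ t)
    (h𝒜 : 𝒜 ⊆ powersetCard k (insert x t)) (hkt : k ≤ #t)
    (hc : ∀ i ∈ t, IsCompressed {i} {x} 𝒜) (h𝒜ne : 𝒜.Nonempty) :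
    (nonMemberSubfamily x 𝒜).Nonempty := by
  obtain ⟨a, ha⟩ := h𝒜ne
  by_cases hxa : x ∈ a
  swap
  · exact ⟨a, mem_nonMemberSubfamily.2 ⟨ha, hxa⟩⟩
  have hcard : #(a.erase x) < #t :=
    (card_erase_lt_of_mem hxa).trans_le ((mem_powersetCard.1 (h𝒜 ha)).2.trans_le hkt)
  obtain ⟨i, hit, hia⟩ := exists_mem_notMem_of_card_lt_card hcard
  have hix : i ≠ x := ne_of_mem_of_not_mem hit hx
  refine ⟨insert i (a.erase x), mem_nonMemberSubfamily.2 ⟨?_, ?_⟩⟩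
  · exact (hc i hit).insert_mem (by rwa [insert_erase hxa]) (notMem_erase x a) hia hix
  · simp [hix.symm]

lemma CrossIntersecting.memberSubfamily_of_isCompressed (h : CrossIntersecting 𝒜 ℬ)
    (hx : x ∉ t) (h𝒜 : 𝒜 ⊆ powersetCard (k + 1) (insert x t))
    (hℬ : ℬ ⊆ powersetCard (k + 1) (insert x t)) (hkt : 2 * k < #t)
    (hc : ∀ i ∈ t, IsCompressed {i} {x} 𝒜) :
    CrossIntersecting (memberSubfamily x 𝒜) (memberSubfamily x ℬ) := by
  intro c hc' d hd
  have hck := (mem_powersetCard.1 (memberSubfamily_subset_powersetCard h𝒜 hc')).2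
  have hdk := (mem_powersetCard.1 (memberSubfamily_subset_powersetCard hℬ hd)).2
  rw [mem_memberSubfamily] at hc' hd
  have hcard : #(c ∪ d) < #t := (card_union_le c d).trans_lt (by omega)
  obtain ⟨i, hit, hicd⟩ := exists_mem_notMem_of_card_lt_card hcard
  rw [mem_union, not_or] at hicd
  have hix : i ≠ x := ne_of_mem_of_not_mem hit hx
  obtain ⟨z, hz⟩ := h _ ((hc i hit).insert_mem hc'.1 hc'.2 hicd.1 hix) _ hd.1
  rw [mem_inter, mem_insert, mem_insert] at hz
  obtain ⟨rfl | hzc, rfl | hzd⟩ := hz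
  · exact absurd rfl hix
  · exact absurd hzd hicd.2
  · exact absurd hzc hc'.2
  · exact ⟨z, mem_inter.2 ⟨hzc, hzd⟩⟩

lemma card_add_choose_le_of_crossIntersecting_singleton (h𝒜 : 𝒜 ⊆ powersetCard r s)
    (hb : b ∈ powersetCard k s) (h : CrossIntersecting 𝒜 {b}) :
    #𝒜 + (#s - k).choose r ≤ (#s).choose r := by
  obtain ⟨hbs, hbk⟩ := mem_powersetCard.1 hb
  have hsub : 𝒜 ⊆ powersetCard r s \ powersetCard r (s \ b) := by
    intro a ha
    refine mem_sdiff.2 ⟨h𝒜 ha, fun ha' => ?_⟩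
    obtain ⟨z, hz⟩ := h a ha b (mem_singleton_self b)
    exact (mem_sdiff.1 ((mem_powersetCard.1 ha').1 (mem_inter.1 hz).1)).2 (mem_inter.1 hz).2
  have := card_sdiff_add_card_eq_card (powersetCard_mono (n := r) (sdiff_subset (s := s) (t := b)))
  rw [card_powersetCard, card_powersetCard, card_sdiff_of_subset hbs, hbk] at this
  have := card_le_card hsub
  omega

lemma CrossIntersecting.card_add_card_le_choose (h𝒜 : 𝒜 ⊆ powersetCard k s)
    (hℬ : ℬ ⊆ powersetCard k s) (hs : #s = 2 * k) (h : CrossIntersecting 𝒜 ℬ) :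
    #𝒜 + #ℬ ≤ (#s).choose k := by
  have hmaps : Set.MapsTo (s \ ·) ℬ ↑(powersetCard k s \ 𝒜) := by
    intro b hb
    obtain ⟨hbs, hbk⟩ := mem_powersetCard.1 (hℬ hb)
    refine mem_sdiff.2 ⟨mem_powersetCard.2 ⟨sdiff_subset, ?_⟩, fun h' => ?_⟩
    · rw [card_sdiff_of_subset hbs]
      omega
    · obtain ⟨z, hz⟩ := h _ h' b hb
      exact (mem_sdiff.1 (mem_inter.1 hz).1).2 (mem_inter.1 hz).2
  have hinj : Set.InjOn (s \ ·) (ℬ : Set (Finset α)) := by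
    intro b₁ hb₁ b₂ hb₂ heq
    rw [← sdiff_sdiff_eq_self (mem_powersetCard.1 (hℬ hb₁)).1,
      ← sdiff_sdiff_eq_self (mem_powersetCard.1 (hℬ hb₂)).1]
    exact congrArg (s \ ·) heq
  have := card_sdiff_add_card_eq_card h𝒜
  rw [card_powersetCard] at this
  have := card_le_card_of_injOn _ hmaps hinj
  omega

def HiltonMilnerBound (s : Finset α) : Prop :=
  ∀ (k : ℕ) (𝒜 ℬ : Finset (Finset α)), 2 * k ≤ #s → 𝒜 ⊆ powersetCard k s →
    ℬ ⊆ powersetCard k s → 𝒜.Nonempty → ℬ.Nonempty → CrossIntersecting 𝒜 ℬ →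
    #𝒜 + #ℬ + (#s - k).choose k ≤ (#s).choose k + 1

lemma hiltonMilnerBound_empty : HiltonMilnerBound (∅ : Finset α) := by
  intro k 𝒜 ℬ hk h𝒜 _ h𝒜ne hℬne h
  have := h.pos_of_subset_powersetCard h𝒜 h𝒜ne hℬne
  rw [card_empty] at hk
  omega

lemma HiltonMilnerBound.card_add_card_add_choose_le (ih : HiltonMilnerBound t)
    (hkt : 2 * (k + 1) ≤ #t) (h𝒜 : 𝒜 ⊆ powersetCard k t) (hℬ : ℬ ⊆ powersetCard k t)
    (h : CrossIntersecting 𝒜 ℬ) (ha : a ∈ powersetCard (k + 1) t)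
    (hb : b ∈ powersetCard (k + 1) t) (h𝒜b : CrossIntersecting 𝒜 {b})
    (haℬ : CrossIntersecting {a} ℬ) :
    #𝒜 + #ℬ + (#t - (k + 1)).choose k ≤ (#t).choose k := by
  rcases 𝒜.eq_empty_or_nonempty with rfl | h𝒜ne
  · simpa using card_add_choose_le_of_crossIntersecting_singleton hℬ ha haℬ.symm
  rcases ℬ.eq_empty_or_nonempty with rfl | hℬne
  · simpa using card_add_choose_le_of_crossIntersecting_singleton h𝒜 hb h𝒜b
  have hk := h.pos_of_subset_powersetCard h𝒜 h𝒜ne hℬne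
  have := ih k 𝒜 ℬ (by omega) h𝒜 hℬ h𝒜ne hℬne h
  have hpascal := Nat.choose_succ_succ' (#t - (k + 1)) (k - 1)
  rw [Nat.sub_add_cancel hk, show #t - (k + 1) + 1 = #t - k by omega] at hpascal
  have := Nat.choose_pos (n := #t - (k + 1)) (k := k - 1) (by omega)
  omega

lemma HiltonMilnerBound.insert_of_isCompressed (hx : x ∉ t) (ih : HiltonMilnerBound t)
    (hkt : 2 * (k + 1) ≤ #t) (h𝒜 : 𝒜 ⊆ powersetCard (k + 1) (insert x t))
    (hℬ : ℬ ⊆ powersetCard (k + 1) (insert x t)) (h𝒜ne : 𝒜.Nonempty) (hℬne : ℬ.Nonempty)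
    (h : CrossIntersecting 𝒜 ℬ) (hc : ∀ i ∈ t, IsCompressed {i} {x} 𝒜 ∧ IsCompressed {i} {x} ℬ) :
    #𝒜 + #ℬ + (#t + 1 - (k + 1)).choose (k + 1) ≤ (#t + 1).choose (k + 1) + 1 := by
  rw [← card_memberSubfamily_add_card_nonMemberSubfamily x 𝒜,
    ← card_memberSubfamily_add_card_nonMemberSubfamily x ℬ]
  obtain ⟨a, ha⟩ := nonMemberSubfamily_nonempty_of_isCompressed hx h𝒜 (by omega)
    (fun i hi => (hc i hi).1) h𝒜ne
  obtain ⟨b, hb⟩ := nonMemberSubfamily_nonempty_of_isCompressed hx hℬ (by omega)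
    (fun i hi => (hc i hi).2) hℬne
  have h0 := ih (k + 1) _ _ (by omega) (nonMemberSubfamily_subset_powersetCard h𝒜)
    (nonMemberSubfamily_subset_powersetCard hℬ) ⟨a, ha⟩ ⟨b, hb⟩ h.nonMemberSubfamily
  have h1 := ih.card_add_card_add_choose_le hkt (memberSubfamily_subset_powersetCard h𝒜)
    (memberSubfamily_subset_powersetCard hℬ)
    (h.memberSubfamily_of_isCompressed hx h𝒜 hℬ (by omega) fun i hi => (hc i hi).1)
    (nonMemberSubfamily_subset_powersetCard h𝒜 ha) (nonMemberSubfamily_subset_powersetCard hℬ hb)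
    (h.memberSubfamily_nonMemberSubfamily.mono subset_rfl (singleton_subset_iff.2 hb))
    (h.symm.memberSubfamily_nonMemberSubfamily.symm.mono (singleton_subset_iff.2 ha) subset_rfl)
  have hpascal := Nat.choose_succ_succ' (#t - (k + 1)) k
  rw [show #t - (k + 1) + 1 = #t + 1 - (k + 1) by omega] at hpascal
  rw [Nat.choose_succ_succ', hpascal]
  omega

lemma HiltonMilnerBound.insert_of_notMem (hx : x ∉ t) (ih : HiltonMilnerBound t) :
    HiltonMilnerBound (insert x t) := by
  intro k 𝒜 ℬ hk h𝒜 hℬ h𝒜ne hℬne h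
  obtain ⟨j, rfl⟩ := Nat.exists_eq_add_one.2 (h.pos_of_subset_powersetCard h𝒜 h𝒜ne hℬne)
  have hs := card_insert_of_notMem hx
  rw [hs] at hk ⊢
  rcases hk.eq_or_lt with hk | hk
  · have := h.card_add_card_le_choose h𝒜 hℬ (by rw [hs, hk])
    rw [hs] at this
    rw [show #t + 1 - (j + 1) = j + 1 by omega, Nat.choose_self]
    omega
  obtain ⟨𝒜', ℬ', ⟨h𝒜', hℬ', h'⟩, h𝒜card, hℬcard, hc⟩ :=
    exists_isCompressed_of_forall_uvCompression t x
      (fun 𝒜 ℬ => 𝒜 ⊆ powersetCard (j + 1) (insert x t) ∧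
        ℬ ⊆ powersetCard (j + 1) (insert x t) ∧ CrossIntersecting 𝒜 ℬ)
      (fun i hi _ _ ⟨h𝒜, hℬ, h⟩ =>
        have hi : {i} ⊆ insert x t := singleton_subset_iff.2 (mem_insert_of_mem hi)
        ⟨uvCompression_subset_powersetCard hi (card_singleton _) h𝒜,
          uvCompression_subset_powersetCard hi (card_singleton _) hℬ, h.uvCompression i x⟩)
      ⟨h𝒜, hℬ, h⟩
  rw [← h𝒜card, ← hℬcard]
  exact ih.insert_of_isCompressed hx (by omega) h𝒜' hℬ'
    (card_pos.1 (h𝒜card ▸ card_pos.2 h𝒜ne)) (card_pos.1 (hℬcard ▸ card_pos.2 hℬne)) h' hc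

lemma hiltonMilnerBound (s : Finset α) : HiltonMilnerBound s := by
  induction s using Finset.induction_on with
  | empty => exact hiltonMilnerBound_empty
  | insert x t hx ih => exact ih.insert_of_notMem hx

end Finset

theorem stmt2 (n k : ℕ) (hnk : 2 * k ≤ n)
    (A B : Finset (Finset (Fin n)))
    (hAu : ∀ a ∈ A, a.card = k) (hBu : ∀ b ∈ B, b.card = k)
    (hAne : A.Nonempty) (hBne : B.Nonempty)
    (hcross : ∀ a ∈ A, ∀ b ∈ B, (a ∩ b).Nonempty) :
    A.card + B.card ≤ n.choose k - (n - k).choose k + 1 := by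
  have := hiltonMilnerBound (univ : Finset (Fin n)) k A B (by simpa using hnk)
    (fun a ha => mem_powersetCard.2 ⟨subset_univ a, hAu a ha⟩)
    (fun b hb => mem_powersetCard.2 ⟨subset_univ b, hBu b hb⟩) hAne hBne hcross
  rw [card_univ, Fintype.card_fin] at this
  have := Nat.choose_le_choose k (Nat.sub_le n k)
  omega
end

section
/- Let G be a vertex-transitive graph, B a nonempty subset of V(G), and S an independent set in G. Then |S|/|V(G)| ≤ α(G[B])/|B|, where G[B] is the subgraph induced on B. Moreover, equality implies |S ∩ B| = α(G[B]). -/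
open scoped Classical

/-- The maximum size of an independent set of `G` contained in `B`
(the independence number of the induced subgraph `G[B]`). -/
noncomputable def indepNumIn {V : Type*} [Fintype V] (G : SimpleGraph V) (B : Finset V) : ℕ :=
  Nat.findGreatest
    (fun m => ∃ s : Finset V, s ⊆ B ∧ (∀ a ∈ s, ∀ b ∈ s, ¬ G.Adj a b) ∧ s.card = m)
    B.card

/-!
Double counting over the automorphism group `Γ` of `G`: since `Γ` acts transitively, each pair
`(x, b)` satisfies `γ x = b` for exactly `|Γ| / |V|` automorphisms, so the average of
`|S ∩ γ⁻¹ B|` over `γ ∈ Γ` is `|S| |B| / |V|`. Each `γ` maps `S ∩ γ⁻¹ B` injectively onto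
an independent subset of `B`, so every term is at most `α(G[B])`. In the case of equality every
term, in particular the one for `γ = 1`, which is `|S ∩ B|`, equals `α(G[B])`.
-/

open Finset MulAction

section Averaging

variable {Γ V : Type*} [Group Γ] [Fintype Γ] [MulAction Γ V] [DecidableEq V]

theorem card_filter_smul_mem_eq_sum (x : V) (B : Finset V) :
    #{g : Γ | g • x ∈ B} = ∑ b ∈ B, #{g : Γ | g • x = b} := by
  rw [card_eq_sum_card_fiberwise (f := (· • x)) (t := B) fun g hg => by simpa using hg]
  refine sum_congr rfl fun b hb => ?_
  congr 1 with g
  simp only [mem_filter, mem_univ, true_and, and_iff_right_iff_imp]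
  exact fun h => h ▸ hb

variable [IsPretransitive Γ V] [Fintype V]

theorem card_mul_card_filter_smul_eq (x b : V) :
    Fintype.card V * #{g : Γ | g • x = b} = Fintype.card Γ := by
  have hconst : ∀ b', #{g : Γ | g • x = b'} = #{g : Γ | g • x = b} := by
    intro b'
    obtain ⟨h, rfl⟩ := exists_smul_eq Γ b' b
    refine card_nbij' (h * ·) (h⁻¹ * ·) ?_ ?_ ?_ ?_ <;> intro g <;>
      simp [mul_smul, inv_smul_eq_iff]
  calc Fintype.card V * #{g : Γ | g • x = b}
      = ∑ b' : V, #{g : Γ | g • x = b'} := by simp [hconst]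
    _ = Fintype.card Γ := (card_eq_sum_card_fiberwise fun g _ => mem_univ (g • x)).symm

theorem card_mul_sum_card_filter_smul_mem (S B : Finset V) :
    Fintype.card V * ∑ g : Γ, #{x ∈ S | g • x ∈ B} = #S * #B * Fintype.card Γ := by
  calc Fintype.card V * ∑ g : Γ, #{x ∈ S | g • x ∈ B}
      = Fintype.card V * ∑ x ∈ S, #{g : Γ | g • x ∈ B} :=
        congrArg (Fintype.card V * ·) (sum_card_bipartiteAbove_eq_sum_card_bipartiteBelow
          (s := (univ : Finset Γ)) (t := S) (r := fun g x => g • x ∈ B))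
    _ = ∑ x ∈ S, ∑ b ∈ B, Fintype.card V * #{g : Γ | g • x = b} := by
        simp only [card_filter_smul_mem_eq_sum, mul_sum]
    _ = #S * #B * Fintype.card Γ := by
        simp only [card_mul_card_filter_smul_eq, sum_const, smul_eq_mul, mul_assoc]

theorem card_mul_card_le_of_forall_card_filter_smul_mem_le {S B : Finset V} {a : ℕ}
    (h : ∀ g : Γ, #{x ∈ S | g • x ∈ B} ≤ a) : #S * #B ≤ Fintype.card V * a := by
  refine Nat.le_of_mul_le_mul_right ?_ (Fintype.card_pos (α := Γ))
  calc #S * #B * Fintype.card Γ = Fintype.card V * ∑ g : Γ, #{x ∈ S | g • x ∈ B} :=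
        (card_mul_sum_card_filter_smul_mem S B).symm
    _ ≤ Fintype.card V * ∑ _g : Γ, a := by gcongr with g; exact h g
    _ = Fintype.card V * a * Fintype.card Γ := by simp [mul_comm, mul_left_comm]

theorem card_mul_card_lt_of_forall_card_filter_smul_mem_le [Nonempty V] {S B : Finset V} {a : ℕ}
    (h : ∀ g : Γ, #{x ∈ S | g • x ∈ B} ≤ a) (hSB : #(S ∩ B) < a) :
    #S * #B < Fintype.card V * a := by
  refine Nat.lt_of_mul_lt_mul_right (a := Fintype.card Γ) ?_
  calc #S * #B * Fintype.card Γ = Fintype.card V * ∑ g : Γ, #{x ∈ S | g • x ∈ B} :=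
        (card_mul_sum_card_filter_smul_mem S B).symm
    _ < Fintype.card V * ∑ _g : Γ, a := by
        refine Nat.mul_lt_mul_of_pos_left ?_ Fintype.card_pos
        refine sum_lt_sum (fun g _ => h g) ⟨1, mem_univ _, ?_⟩
        simpa [filter_mem_eq_inter] using hSB
    _ = Fintype.card V * a * Fintype.card Γ := by simp [mul_comm, mul_left_comm]

end Averaging

namespace SimpleGraph

variable {V : Type*} [Fintype V] (G : SimpleGraph V)

theorem card_le_indepNumIn {B s : Finset V} (hsB : s ⊆ B)
    (hs : ∀ a ∈ s, ∀ b ∈ s, ¬ G.Adj a b) : #s ≤ indepNumIn G B :=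
  Nat.le_findGreatest (card_le_card hsB) ⟨s, hsB, hs, rfl⟩

theorem card_filter_apply_mem_le_indepNumIn [DecidableEq V] (e : G ≃g G) {S : Finset V}
    (hS : ∀ a ∈ S, ∀ b ∈ S, ¬ G.Adj a b) (B : Finset V) :
    #{x ∈ S | e x ∈ B} ≤ indepNumIn G B := by
  rw [← card_image_of_injective _ e.injective]
  refine G.card_le_indepNumIn (fun b hb => ?_) ?_
  · obtain ⟨x, hx, rfl⟩ := mem_image.mp hb
    exact (mem_filter.mp hx).2
  · simp only [mem_image, mem_filter]
    rintro _ ⟨x, ⟨hx, -⟩, rfl⟩ _ ⟨y, ⟨hy, -⟩, rfl⟩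
    rw [e.map_adj_iff]
    exact hS x hx y hy

instance : Finite (G ≃g G) :=
  Finite.of_injective _ RelIso.toEquiv_injective

end SimpleGraph

theorem stmt4 {V : Type*} [Fintype V] [DecidableEq V] (G : SimpleGraph V)
    (htrans : ∀ u v : V, ∃ e : G ≃g G, e u = v)
    (B : Finset V) (hB : B.Nonempty)
    (S : Finset V) (hS : ∀ a ∈ S, ∀ b ∈ S, ¬ G.Adj a b) :
    (S.card : ℚ) / (Fintype.card V : ℚ) ≤ (indepNumIn G B : ℚ) / (B.card : ℚ) ∧
      ((S.card : ℚ) / (Fintype.card V : ℚ) = (indepNumIn G B : ℚ) / (B.card : ℚ) →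
        (S ∩ B).card = indepNumIn G B) := by
  have : Nonempty V := hB.to_type
  have : Fintype (G ≃g G) := Fintype.ofFinite _
  have : IsPretransitive (G ≃g G) V := ⟨htrans⟩
  have hbound (e : G ≃g G) : #{x ∈ S | e • x ∈ B} ≤ indepNumIn G B :=
    G.card_filter_apply_mem_le_indepNumIn e hS B
  have hV : (0 : ℚ) < Fintype.card V := by exact_mod_cast Fintype.card_pos
  have hB' : (0 : ℚ) < #B := by exact_mod_cast hB.card_pos
  refine ⟨?_, fun heq => ?_⟩
  · rw [div_le_div_iff₀ hV hB', mul_comm (indepNumIn G B : ℚ)]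
    exact_mod_cast card_mul_card_le_of_forall_card_filter_smul_mem_le hbound
  · have hSB : #(S ∩ B) ≤ indepNumIn G B := G.card_le_indepNumIn inter_subset_right
      fun a ha b hb => hS a (mem_inter.mp ha).1 b (mem_inter.mp hb).1
    refine hSB.eq_of_not_lt fun hlt => ?_
    rw [div_eq_div_iff hV.ne' hB'.ne', mul_comm (indepNumIn G B : ℚ)] at heq
    exact (card_mul_card_lt_of_forall_card_filter_smul_mem_le hbound hlt).ne
      (by exact_mod_cast heq)
end

section
/- Let G be a vertex-transitive graph and A an independent set of G. Then |A| / |N[A]| ≤ α(G) / |V(G)|, where N[A] = A ∪ N(A) is the closed neighborhood of A. -/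
/-!
Let `S` be a maximum independent set. For every automorphism `g`, the set
`A ∪ (g S \ N[A])` is independent, so `g S` meets `N[A]` in at least `|A|` vertices.
Since the automorphism group acts transitively, each vertex lies in `g S` for the same
fraction `α(G) / |V|` of all automorphisms `g`; hence the average of `|g S ∩ N[A]|` over the
group is `α(G) |N[A]| / |V|`, and this average is at least `|A|`.
-/

open scoped Classical

/-- The independence number of `G`. -/
noncomputable def indepNum {V : Type*} [Fintype V] (G : SimpleGraph V) : ℕ :=
  Nat.findGreatest
    (fun m => ∃ s : Finset V, (∀ a ∈ s, ∀ b ∈ s, ¬ G.Adj a b) ∧ s.card = m)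
    (Fintype.card V)

/-- The closed neighborhood `N[A] = A ∪ N(A)` of a set of vertices. -/
noncomputable def closedNbhd {V : Type*} [Fintype V] (G : SimpleGraph V) (A : Finset V) :
    Finset V :=
  A ∪ Finset.univ.filter (fun b => ∃ a ∈ A, G.Adj a b)

open Finset
open scoped Pointwise

namespace MulAction

variable {Γ X : Type*} [Group Γ] [MulAction Γ X] [Fintype Γ] [Fintype X] [IsPretransitive Γ X]

theorem card_filter_smul_eq_mul_card (x y : X) :
    #{g : Γ | g • x = y} * Fintype.card X = Fintype.card Γ := by
  obtain ⟨h, rfl⟩ := exists_smul_eq Γ x y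
  have hfiber : #{g : Γ | g • x = h • x} = Nat.card (stabilizer Γ x) := by
    rw [← Fintype.card_subtype, Nat.card_eq_fintype_card]
    exact Fintype.card_congr <| (Equiv.mulLeft h⁻¹).subtypeEquiv fun g => by
      simp [mul_smul, inv_smul_eq_iff, mem_stabilizer_iff]
  rw [hfiber, ← Nat.card_eq_fintype_card (α := X), ← index_stabilizer_of_transitive Γ x,
    Subgroup.card_mul_index, Nat.card_eq_fintype_card]

theorem card_filter_smul_mem_mul_card (x : X) (t : Finset X) :
    #{g : Γ | g • x ∈ t} * Fintype.card X = Fintype.card Γ * #t := by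
  have hfibers : #{g : Γ | g • x ∈ t} = ∑ y ∈ t, #{g : Γ | g • x = y} := by
    rw [card_eq_sum_card_fiberwise (s := {g : Γ | g • x ∈ t}) (f := (· • x)) fun g hg => by
      simpa using hg]
    refine sum_congr rfl fun y hy => congrArg card ?_
    rw [filter_filter]
    exact filter_congr fun g _ => ⟨And.right, by rintro rfl; exact ⟨hy, rfl⟩⟩
  rw [hfibers, sum_mul, sum_congr rfl fun y _ => card_filter_smul_eq_mul_card x y, sum_const,
    smul_eq_mul, mul_comm]

theorem sum_card_smul_inter_mul_card (s t : Finset X) :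
    (∑ g : Γ, #((g • s) ∩ t)) * Fintype.card X = Fintype.card Γ * #s * #t := by
  have hcount (g : Γ) : #((g • s) ∩ t) = #{x ∈ s | g • x ∈ t} := by
    rw [← card_smul_finset g⁻¹, smul_finset_inter, inv_smul_smul]
    congr 1
    ext x
    simp [mem_inv_smul_finset_iff]
  have hswap : ∑ g : Γ, #{x ∈ s | g • x ∈ t} = ∑ x ∈ s, #{g : Γ | g • x ∈ t} :=
    sum_card_bipartiteAbove_eq_sum_card_bipartiteBelow (fun g x => g • x ∈ t)
  rw [sum_congr rfl fun g _ => hcount g, hswap, sum_mul,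
    sum_congr rfl fun x _ => card_filter_smul_mem_mul_card x t, sum_const, smul_eq_mul]
  ring

end MulAction

namespace SimpleGraph

variable {V W : Type*} {G : SimpleGraph V}

theorem isIndepSet_coe_iff {s : Finset V} :
    G.IsIndepSet (s : Set V) ↔ ∀ a ∈ s, ∀ b ∈ s, ¬ G.Adj a b :=
  ⟨fun h _ ha _ hb hab => h ha hb hab.ne hab, fun h _ ha _ hb _ => h _ ha _ hb⟩

instance Iso.finite {G' : SimpleGraph W} [Finite V] [Finite W] : Finite (G ≃g G') :=
  DFunLike.finite _

theorem IsIndepSet.image_iso {G' : SimpleGraph W} (f : G ≃g G') {s : Set V}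
    (h : G.IsIndepSet s) : G'.IsIndepSet (f '' s) := by
  rintro _ ⟨a, ha, rfl⟩ _ ⟨b, hb, rfl⟩ hne
  rw [f.map_adj_iff]
  exact h ha hb (ne_of_apply_ne f hne)

end SimpleGraph

section IndependentSets

open SimpleGraph (isIndepSet_coe_iff)

variable {V : Type*} [Fintype V] {G : SimpleGraph V}

theorem exists_isIndepSet_card_eq_indepNum (G : SimpleGraph V) :
    ∃ s : Finset V, G.IsIndepSet (s : Set V) ∧ #s = indepNum G := by
  simp_rw [isIndepSet_coe_iff]
  exact Nat.findGreatest_spec (P := fun m => ∃ s : Finset V,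
    (∀ a ∈ s, ∀ b ∈ s, ¬ G.Adj a b) ∧ #s = m) (Nat.zero_le _) ⟨∅, by simp⟩

theorem card_le_indepNum_of_isIndepSet {s : Finset V} (hs : G.IsIndepSet (s : Set V)) :
    #s ≤ indepNum G :=
  Nat.le_findGreatest (card_le_univ s) ⟨s, isIndepSet_coe_iff.1 hs, rfl⟩

theorem subset_closedNbhd (A : Finset V) : A ⊆ closedNbhd G A :=
  subset_union_left

theorem mem_closedNbhd_of_adj {A : Finset V} {a b : V} (ha : a ∈ A) (hab : G.Adj a b) :
    b ∈ closedNbhd G A :=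
  mem_union_right _ (mem_filter.2 ⟨mem_univ b, a, ha, hab⟩)

theorem isIndepSet_union_sdiff_closedNbhd {A T : Finset V} (hA : G.IsIndepSet (A : Set V))
    (hT : G.IsIndepSet (T : Set V)) :
    G.IsIndepSet ((A ∪ T \ closedNbhd G A : Finset V) : Set V) := by
  rw [isIndepSet_coe_iff] at *
  simp only [mem_union, mem_sdiff]
  rintro a (ha | ⟨haT, haN⟩) b (hb | ⟨hbT, hbN⟩) hab
  · exact hA a ha b hb hab
  · exact hbN (mem_closedNbhd_of_adj ha hab)
  · exact haN (mem_closedNbhd_of_adj hb hab.symm)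
  · exact hT a haT b hbT hab

theorem card_le_card_inter_closedNbhd {A T : Finset V} (hA : G.IsIndepSet (A : Set V))
    (hT : G.IsIndepSet (T : Set V)) (hTmax : #T = indepNum G) :
    #A ≤ #(T ∩ closedNbhd G A) := by
  have hdisj : Disjoint A (T \ closedNbhd G A) :=
    disjoint_sdiff.mono_left (subset_closedNbhd A)
  have hexchange := card_le_indepNum_of_isIndepSet (isIndepSet_union_sdiff_closedNbhd hA hT)
  rw [card_union_of_disjoint hdisj, ← hTmax, ← card_sdiff_add_card_inter T (closedNbhd G A)]
    at hexchange
  omega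

end IndependentSets

theorem stmt5_general {V : Type*} [Fintype V] (G : SimpleGraph V)
    (htrans : ∀ u v : V, ∃ e : G ≃g G, e u = v)
    (A : Finset V) (hA : ∀ a ∈ A, ∀ b ∈ A, ¬ G.Adj a b) :
    (A.card : ℚ) / ((closedNbhd G A).card : ℚ) ≤
      (indepNum G : ℚ) / (Fintype.card V : ℚ) := by
  let := Fintype.ofFinite (G ≃g G)
  have : MulAction.IsPretransitive (G ≃g G) V := ⟨htrans⟩
  set N := closedNbhd G A
  obtain ⟨S, hS, hScard⟩ := exists_isIndepSet_card_eq_indepNum G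
  have hmeet (g : G ≃g G) : #A ≤ #((g • S) ∩ N) := by
    refine card_le_card_inter_closedNbhd (SimpleGraph.isIndepSet_coe_iff.2 hA) ?_ ?_
    · rw [coe_smul_finset, ← Set.image_smul]
      exact hS.image_iso g
    · rw [card_smul_finset, hScard]
  have hcount : #A * Fintype.card V ≤ indepNum G * #N := by
    refine Nat.le_of_mul_le_mul_left ?_ (Fintype.card_pos (α := G ≃g G))
    calc Fintype.card (G ≃g G) * (#A * Fintype.card V)
        = (∑ _g : G ≃g G, #A) * Fintype.card V := by
          rw [sum_const, card_univ, smul_eq_mul, mul_assoc]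
      _ ≤ (∑ g : G ≃g G, #((g • S) ∩ N)) * Fintype.card V :=
          Nat.mul_le_mul_right _ (sum_le_sum fun g _ => hmeet g)
      _ = Fintype.card (G ≃g G) * (indepNum G * #N) := by
        rw [MulAction.sum_card_smul_inter_mul_card, hScard, mul_assoc]
  rcases (#N).eq_zero_or_pos with hN | hN
  · rw [hN, Nat.cast_zero, div_zero]
    positivity
  · rw [div_le_div_iff₀ (by exact_mod_cast hN) (by exact_mod_cast hN.trans_le (card_le_univ N))]
    exact_mod_cast hcount

theorem stmt5 {V : Type*} [Fintype V] [Nonempty V] (G : SimpleGraph V)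
    (htrans : ∀ u v : V, ∃ e : G ≃g G, e u = v)
    (A : Finset V) (hA : ∀ a ∈ A, ∀ b ∈ A, ¬ G.Adj a b) :
    (A.card : ℚ) / ((closedNbhd G A).card : ℚ) ≤
      (indepNum G : ℚ) / (Fintype.card V : ℚ) :=
  stmt5_general G htrans A hA
end

section
/- Let p ≥ 1 and nᵢ, kᵢ positive integers with k₁/n₁ ≤ k₂/n₂ ≤ ... ≤ k_p/n_p ≤ 1/2. If F is a family of 'multi-part sets' (p-tuples (A₁,...,A_p) with Aᵢ a kᵢ-subset of [nᵢ]) such that any two members intersect in at least one coordinate (i.e., for any F, F' ∈ F there exists i with Fᵢ ∩ F'ᵢ ≠ ∅), then |F| ≤ (k_p/n_p) · Πᵢ C(nᵢ, kᵢ). -/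
/-!
Katona's cyclic permutation method, run on all coordinates at once. Put `m = n_p`, `K = k_p`.
For permutations `σᵢ` of `[nᵢ]` and `t ∈ ℤ/m`, let `W(σ, t)` be the multi-part set whose
`i`-th part is `σᵢ` applied to the arc of length `kᵢ` starting at `⌊t nᵢ / m⌋`. If `t, t'` are
at cyclic distance `≥ K`, then, because `kᵢ / nᵢ ≤ K / m`, the rescaled starting points are at
cyclic distance `≥ kᵢ` in `ℤ/nᵢ`, so `W(σ, t)` and `W(σ, t')` are disjoint in every part.
By Katona's circle lemma on `ℤ/m`, valid as `2K ≤ m`, at most `K` of the sets `W(σ, t)` lie in an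
intersecting family `F`. On the other hand, for fixed `t` the tuple `W(σ, t)` is uniformly
distributed over all multi-part sets as `σ` varies, so double counting the pairs `(σ, t)` with
`W(σ, t) ∈ F` gives `m |F| ≤ K ∏ C(nᵢ, kᵢ)`.
-/

open Finset
open scoped Nat Pointwise

def cyclicDist {m : ℕ} (a b : Fin m) : ℕ := min (a - b).val (b - a).val

section CyclicDist

variable {m : ℕ}

lemma cyclicDist_comm (a b : Fin m) : cyclicDist a b = cyclicDist b a := min_comm _ _

lemma cyclicDist_of_le {a b : Fin m} (h : b ≤ a) :
    cyclicDist a b = min (a.val - b.val) (m - (a.val - b.val)) := by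
  have hab := Fin.coe_sub_iff_le.mpr h
  rcases h.eq_or_lt with rfl | hlt
  · simp [cyclicDist, hab]
  · rw [cyclicDist, hab, Fin.coe_sub_iff_lt.mpr hlt]
    congr 1
    omega

lemma cyclicDist_sub_left [NeZero m] (a b c : Fin m) :
    cyclicDist (c - a) (c - b) = cyclicDist a b := by
  rw [cyclicDist, sub_sub_sub_cancel_left, sub_sub_sub_cancel_left, min_comm, cyclicDist]

lemma cyclicDist_lt_of_val_lt {a b : Fin m} {K : ℕ} (ha : a.val < K) (hb : b.val < K) :
    cyclicDist a b < K := by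
  rcases le_total b a with h | h
  · rw [cyclicDist_of_le h]; omega
  · rw [cyclicDist_comm, cyclicDist_of_le h]; omega

/-- Katona's circle lemma. -/
theorem card_le_of_cyclicDist_lt {K : ℕ} (hKm : 2 * K ≤ m) {T : Finset (Fin m)}
    (hT : ∀ t ∈ T, ∀ t' ∈ T, cyclicDist t t' < K) : #T ≤ K := by
  rcases T.eq_empty_or_nonempty with rfl | hne
  · simp
  set t₀ := T.min' hne
  have hclose : ∀ t ∈ T, ∀ t' ∈ T, t' ≤ t →
      min (t.val - t'.val) (m - (t.val - t'.val)) < K := fun t ht t' ht' h =>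
    cyclicDist_of_le h ▸ hT t ht t' ht'
  have hnear : ∀ t ∈ T, t₀.val ≤ t.val ∧ min (t.val - t₀.val) (m - (t.val - t₀.val)) < K :=
    fun t ht => ⟨T.min'_le t ht, hclose t ht t₀ (T.min'_mem hne) (T.min'_le t ht)⟩
  -- an offset `d ≥ K` from `t₀` is in fact `> m - K`; it is sent to `d + K - m ∈ (0, K)`
  let ψ : Fin m → ℕ := fun t =>
    if t.val - t₀.val < K then t.val - t₀.val else t.val - t₀.val + K - m
  have hmaps : ∀ t ∈ T, ψ t ∈ range K := by
    intro t ht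
    have := hnear t ht
    have := t.isLt
    simp only [ψ, mem_range]
    split_ifs <;> omega
  have hinj : ∀ t ∈ T, ∀ t' ∈ T, t' ≤ t → ψ t = ψ t' → t = t' := by
    intro t ht t' ht' hle hψ
    have := hnear t ht
    have := hnear t' ht'
    have := hclose t ht t' ht' hle
    have := t.isLt
    have : t'.val ≤ t.val := hle
    simp only [ψ] at hψ
    apply Fin.ext
    split_ifs at hψ <;> omega
  refine (card_le_card_of_injOn ψ hmaps fun t ht t' ht' hψ => ?_).trans_eq (card_range K)
  rcases le_total t' t with h | h
  · exact hinj t ht t' ht' h hψ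
  · exact (hinj t' ht' t ht h hψ.symm).symm

end CyclicDist

def arc {N : ℕ} (s : Fin N) (len : ℕ) : Finset (Fin N) := {x | (x - s).val < len}

section Arc

variable {N : ℕ} [NeZero N]

lemma card_arc (s : Fin N) {len : ℕ} (h : len ≤ N) : #(arc s len) = len := by
  have : arc s len =
      ({y : Fin N | y.val < len} : Finset (Fin N)).map (Equiv.addRight s).toEmbedding := by
    ext x
    simp [arc, sub_eq_add_neg]
  rw [this, card_map, Fin.card_filter_val_lt, min_eq_right h]

lemma disjoint_arc {s s' : Fin N} {len : ℕ} (h : len ≤ cyclicDist s s') :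
    Disjoint (arc s len) (arc s' len) := by
  rw [disjoint_left]
  intro x hx hx'
  simp only [arc, mem_filter, mem_univ, true_and] at hx hx'
  have := cyclicDist_lt_of_val_lt hx' hx
  rw [cyclicDist_sub_left, cyclicDist_comm] at this
  omega

end Arc

def rescale {m : ℕ} (N : ℕ) [NeZero N] (t : Fin m) : Fin N :=
  ⟨t.val * N / m, Nat.div_lt_of_lt_mul (Nat.mul_lt_mul_of_pos_right t.isLt (NeZero.pos N))⟩

lemma rescale_mono {m N : ℕ} [NeZero N] : Monotone (rescale (m := m) N) :=
  fun _ _ h => Nat.div_le_div_right (Nat.mul_le_mul_right _ h)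

lemma le_cyclicDist_rescale {m N k K : ℕ} [NeZero N] (hkm : k * m ≤ K * N) {t t' : Fin m}
    (h : K ≤ cyclicDist t t') : k ≤ cyclicDist (rescale N t) (rescale N t') := by
  wlog hle : t' ≤ t generalizing t t'
  · rw [cyclicDist_comm] at h ⊢
    exact this h (le_of_not_ge hle)
  rw [cyclicDist_of_le hle] at h
  rw [cyclicDist_of_le (rescale_mono hle)]
  simp only [rescale]
  have hm : 0 < m := t.pos
  set d := t.val - t'.val
  -- the gap `⌊tN/m⌋ - ⌊t'N/m⌋` is at least `⌊dN/m⌋ ≥ k` and at most `N - k`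
  have ht : t.val * N = t'.val * N + d * N := by rw [← add_mul]; congr 1; omega
  have hKd : K ≤ d := (le_min_iff.mp h).1
  have hd : d * N + k * m ≤ N * m := by
    have : d + K ≤ m := by have := t.isLt; omega
    nlinarith
  have hlow : k ≤ d * N / m :=
    (Nat.le_div_iff_mul_le hm).mpr (hkm.trans (Nat.mul_le_mul_right _ hKd))
  have hgap : t'.val * N / m + d * N / m ≤ t.val * N / m := ht ▸ Nat.div_add_div_le_add_div
  have hhigh : t.val * N / m + k ≤ t'.val * N / m + N := by
    rw [← Nat.add_mul_div_right _ _ hm, ← Nat.add_mul_div_right _ _ hm]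
    exact Nat.div_le_div_right (by omega)
  omega

lemma card_filter_smul_eq_mul_choose {α : Type*} [Fintype α] [DecidableEq α] {a g : Finset α}
    (h : #a = #g) :
    #{π : Equiv.Perm α | π • a = g} * (Fintype.card α).choose #a = (Fintype.card α)! := by
  have hfiber : ∀ g' ∈ powersetCard #a univ,
      #{π : Equiv.Perm α | π • a = g'} = #{π : Equiv.Perm α | π • a = g} := by
    intro g' hg'
    have := Set.powersetCard.isPretransitive (α := α) (n := #a)
    obtain ⟨τ, hτ⟩ := MulAction.exists_smul_eq (Equiv.Perm α)
      (Set.powersetCard.ofCard (n := #a) h.symm)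
      (Set.powersetCard.ofCard (mem_powersetCard_univ.mp hg'))
    have hτ : τ • g = g' := congrArg Subtype.val hτ
    refine card_nbij' (τ⁻¹ * ·) (τ * ·) ?_ ?_ ?_ ?_
    · intro π hπ
      simp only [coe_filter, mem_univ, true_and, Set.mem_ofPred_eq] at hπ ⊢
      rw [mul_smul, hπ, ← hτ, inv_smul_smul]
    · intro π hπ
      simp only [coe_filter, mem_univ, true_and, Set.mem_ofPred_eq] at hπ ⊢
      rw [mul_smul, hπ, hτ]
    · intro π _; simp
    · intro π _; simp
  have hsum :
      (Fintype.card α)! = ∑ g' ∈ powersetCard #a univ, #{π : Equiv.Perm α | π • a = g'} := by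
    rw [← Fintype.card_perm, ← card_univ]
    exact card_eq_sum_card_fiberwise fun π _ => mem_powersetCard_univ.mpr (card_smul_finset π a)
  rw [hsum, sum_congr rfl hfiber, sum_const, card_powersetCard, card_univ, smul_eq_mul, mul_comm]

section PermArcs

variable {ι : Type*} {n : ι → ℕ} [∀ i, NeZero (n i)] {m K : ℕ}

def permArcs (k : ι → ℕ) (σ : ∀ i, Equiv.Perm (Fin (n i))) (t : Fin m) :
    ∀ i, Finset (Fin (n i)) :=
  fun i => σ i • arc (rescale (n i) t) (k i)

lemma disjoint_permArcs {k : ι → ℕ} (σ : ∀ i, Equiv.Perm (Fin (n i))) {i : ι}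
    (hkm : k i * m ≤ K * n i) {t t' : Fin m} (h : K ≤ cyclicDist t t') :
    Disjoint (permArcs k σ t i) (permArcs k σ t' i) := by
  simp only [permArcs]
  rw [disjoint_iff_inter_eq_empty, ← smul_finset_inter, smul_finset_eq_empty,
    ← disjoint_iff_inter_eq_empty]
  exact disjoint_arc (le_cyclicDist_rescale hkm h)

variable [Fintype ι]

lemma card_filter_permArcs_mem_le {k : ι → ℕ} (hKm : 2 * K ≤ m) (hkm : ∀ i, k i * m ≤ K * n i)
    {F : Finset (∀ i, Finset (Fin (n i)))} (hF : ∀ f ∈ F, ∀ g ∈ F, ∃ i, (f i ∩ g i).Nonempty)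
    (σ : ∀ i, Equiv.Perm (Fin (n i))) : #{t : Fin m | permArcs k σ t ∈ F} ≤ K := by
  refine card_le_of_cyclicDist_lt hKm fun t ht t' ht' => ?_
  by_contra! hfar
  obtain ⟨i, hi⟩ := hF _ (mem_filter.mp ht).2 _ (mem_filter.mp ht').2
  exact not_disjoint_iff_nonempty_inter.mpr hi (disjoint_permArcs σ (hkm i) hfar)

variable [DecidableEq ι]

lemma card_filter_permArcs_mem_mul {k : ι → ℕ} (hkn : ∀ i, k i ≤ n i)
    {F : Finset (∀ i, Finset (Fin (n i)))} (hF : ∀ f ∈ F, ∀ i, #(f i) = k i) (t : Fin m) :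
    #{σ : ∀ i, Equiv.Perm (Fin (n i)) | permArcs k σ t ∈ F} * ∏ i, (n i).choose (k i) =
      #F * ∏ i, (n i)! := by
  have hfiber : ∀ f ∈ F, #{σ : ∀ i, Equiv.Perm (Fin (n i)) | permArcs k σ t = f} *
      ∏ i, (n i).choose (k i) = ∏ i, (n i)! := by
    intro f hf
    have : ({σ | permArcs k σ t = f} : Finset (∀ i, Equiv.Perm (Fin (n i)))) =
        Fintype.piFinset fun i => {π | π • arc (rescale (n i) t) (k i) = f i} := by
      ext σ
      simp [permArcs, funext_iff]
    rw [this, Fintype.card_piFinset, ← prod_mul_distrib]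
    refine prod_congr rfl fun i _ => ?_
    have hcard := card_arc (rescale (n i) t) (hkn i)
    simpa [hcard] using card_filter_smul_eq_mul_choose (hcard.trans (hF f hf i).symm)
  calc #{σ : ∀ i, Equiv.Perm (Fin (n i)) | permArcs k σ t ∈ F} * ∏ i, (n i).choose (k i)
      = ∑ f ∈ F, #{σ : ∀ i, Equiv.Perm (Fin (n i)) | permArcs k σ t = f} *
          ∏ i, (n i).choose (k i) := by
        rw [card_eq_sum_card_fiberwise (f := (permArcs k · t)) (t := F)
          fun σ hσ => by simpa using hσ, sum_mul]
        refine sum_congr rfl fun f hf => ?_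
        rw [filter_filter]
        congr 2
        exact filter_congr fun σ _ => and_iff_right_of_imp fun h => h ▸ hf
    _ = #F * ∏ i, (n i)! := by rw [sum_congr rfl hfiber, sum_const, smul_eq_mul]

theorem card_mul_le_of_intersecting {k : ι → ℕ} (hKm : 2 * K ≤ m)
    (hkm : ∀ i, k i * m ≤ K * n i) {F : Finset (∀ i, Finset (Fin (n i)))}
    (hcard : ∀ f ∈ F, ∀ i, #(f i) = k i) (hF : ∀ f ∈ F, ∀ g ∈ F, ∃ i, (f i ∩ g i).Nonempty) :
    #F * m ≤ K * ∏ i, (n i).choose (k i) := by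
  rcases m.eq_zero_or_pos with rfl | hm
  · simp
  have hkn : ∀ i, k i ≤ n i := fun i => by nlinarith [hkm i]
  have hperms : Fintype.card (∀ i, Equiv.Perm (Fin (n i))) = ∏ i, (n i)! := by
    simp [Fintype.card_pi, Fintype.card_perm]
  have hdouble := sum_card_bipartiteAbove_eq_sum_card_bipartiteBelow (s := univ) (t := univ)
    fun (t : Fin m) (σ : ∀ i, Equiv.Perm (Fin (n i))) => permArcs k σ t ∈ F
  refine Nat.le_of_mul_le_mul_right (c := ∏ i, (n i)!) ?_
    (prod_pos fun i _ => (n i).factorial_pos)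
  calc #F * m * ∏ i, (n i)!
      = ∑ t : Fin m, #{σ : ∀ i, Equiv.Perm (Fin (n i)) | permArcs k σ t ∈ F} *
          ∏ i, (n i).choose (k i) := by
        simp only [card_filter_permArcs_mem_mul hkn hcard, sum_const, card_univ,
          Fintype.card_fin, smul_eq_mul]
        ring
    _ = (∑ σ : ∀ i, Equiv.Perm (Fin (n i)), #{t : Fin m | permArcs k σ t ∈ F}) *
          ∏ i, (n i).choose (k i) := by
        rw [← sum_mul]
        exact congrArg (· * _) hdouble
    _ ≤ (Fintype.card (∀ i, Equiv.Perm (Fin (n i))) * K) * ∏ i, (n i).choose (k i) := by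
        gcongr
        exact sum_le_card_nsmul _ _ _ fun σ _ => card_filter_permArcs_mem_le hKm hkm hF σ
    _ = K * (∏ i, (n i).choose (k i)) * ∏ i, (n i)! := by
        rw [hperms]; ring

end PermArcs

theorem stmt8_general (p : ℕ) (n k : Fin (p + 1) → ℕ)
    (hn : ∀ i, 1 ≤ n i)
    (hmono : ∀ i j : Fin (p + 1), i ≤ j →
      (k i : ℚ) / (n i : ℚ) ≤ (k j : ℚ) / (n j : ℚ))
    (hhalf : (k (Fin.last p) : ℚ) / (n (Fin.last p) : ℚ) ≤ 1 / 2)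
    (F : Finset (∀ i, Finset (Fin (n i))))
    (huniform : ∀ f ∈ F, ∀ i, (f i).card = k i)
    (hint : ∀ f ∈ F, ∀ g ∈ F, ∃ i, (f i ∩ g i).Nonempty) :
    (F.card : ℚ) ≤ (k (Fin.last p) : ℚ) / (n (Fin.last p) : ℚ) *
      ∏ i, ((n i).choose (k i) : ℚ) := by
  have : ∀ i, NeZero (n i) := fun i => NeZero.of_pos (hn i)
  have hpos : ∀ i, (0 : ℚ) < n i := fun i => by exact_mod_cast hn i
  have hKm : 2 * k (Fin.last p) ≤ n (Fin.last p) := by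
    rw [div_le_div_iff₀ (hpos _) two_pos] at hhalf
    exact_mod_cast (by linarith : (2 * k (Fin.last p) : ℚ) ≤ n (Fin.last p))
  have hkm : ∀ i, k i * n (Fin.last p) ≤ k (Fin.last p) * n i := fun i => by
    have := hmono i _ (Fin.le_last i)
    rw [div_le_div_iff₀ (hpos i) (hpos _)] at this
    exact_mod_cast this
  rw [div_mul_eq_mul_div, le_div_iff₀ (hpos _)]
  exact_mod_cast card_mul_le_of_intersecting hKm hkm huniform hint

theorem stmt8 (p : ℕ) (n k : Fin (p + 1) → ℕ)
    (hn : ∀ i, 1 ≤ n i) (hk : ∀ i, 1 ≤ k i)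
    (hmono : ∀ i j : Fin (p + 1), i ≤ j →
      (k i : ℚ) / (n i : ℚ) ≤ (k j : ℚ) / (n j : ℚ))
    (hhalf : (k (Fin.last p) : ℚ) / (n (Fin.last p) : ℚ) ≤ 1 / 2)
    (F : Finset (∀ i, Finset (Fin (n i))))
    (huniform : ∀ f ∈ F, ∀ i, (f i).card = k i)
    (hint : ∀ f ∈ F, ∀ g ∈ F, ∃ i, (f i ∩ g i).Nonempty) :
    (F.card : ℚ) ≤ (k (Fin.last p) : ℚ) / (n (Fin.last p) : ℚ) *
      ∏ i, ((n i).choose (k i) : ℚ) :=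
  stmt8_general p n k hn hmono hhalf F huniform hint
end

section
/- Let G(X,Y) be a non-complete bipartite graph and let A, B ⊆ X be fragments in X with A ∩ B ≠ ∅ and N(A ∪ B) ≠ Y. Then both A ∩ B and A ∪ B are fragments in X. -/
open scoped Classical

/-- The neighborhood in `Y` of a set `A ⊆ X` in the bipartite graph with edge
relation `E : X → Y → Prop`. -/
noncomputable def nbhd {X Y : Type*} [Fintype Y] (E : X → Y → Prop) (A : Finset X) :
    Finset Y :=
  Finset.univ.filter (fun y => ∃ a ∈ A, E a y)

/-- `ε(X) = min { |N(A)| - |A| : A ⊆ X, N(A) ≠ Y }`. -/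
noncomputable def eps {X Y : Type*} [Fintype X] [Fintype Y] (E : X → Y → Prop) : ℤ :=
  sInf {d : ℤ | ∃ A : Finset X, nbhd E A ≠ Finset.univ ∧
    d = ((nbhd E A).card : ℤ) - (A.card : ℤ)}

/-- `A ⊆ X` is a fragment if `N(A) ≠ Y` and `|N(A)| - |A| = ε(X)`. -/
noncomputable def IsFragment {X Y : Type*} [Fintype X] [Fintype Y] (E : X → Y → Prop)
    (A : Finset X) : Prop :=
  nbhd E A ≠ Finset.univ ∧ ((nbhd E A).card : ℤ) - (A.card : ℤ) = eps E

/- `|N(·)| - |·|` is submodular, because `N(A ∪ B) = N(A) ∪ N(B)` and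
`N(A ∩ B) ⊆ N(A) ∩ N(B)`. Both `A ∩ B` and `A ∪ B` have non-full neighbourhoods, so each
of their surpluses is at least `ε(X)`, while by submodularity the two add up to at most `2 ε(X)`.
Hence both equal `ε(X)`. -/

section Fragments

variable {X Y : Type*} [Fintype Y] (E : X → Y → Prop)

noncomputable def surplus (A : Finset X) : ℤ :=
  ((nbhd E A).card : ℤ) - (A.card : ℤ)

theorem nbhd_union (A B : Finset X) : nbhd E (A ∪ B) = nbhd E A ∪ nbhd E B := by
  ext y
  simp only [nbhd, Finset.mem_filter, Finset.mem_union, Finset.mem_univ, true_and,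
    or_and_right, exists_or]

theorem nbhd_mono {A B : Finset X} (h : A ⊆ B) : nbhd E A ⊆ nbhd E B := by
  intro y hy
  simp only [nbhd, Finset.mem_filter, Finset.mem_univ, true_and] at hy ⊢
  obtain ⟨a, ha, hE⟩ := hy
  exact ⟨a, h ha, hE⟩

theorem card_nbhd_inter_add_card_nbhd_union_le (A B : Finset X) :
    (nbhd E (A ∩ B)).card + (nbhd E (A ∪ B)).card ≤ (nbhd E A).card + (nbhd E B).card := by
  have hinter : nbhd E (A ∩ B) ⊆ nbhd E A ∩ nbhd E B :=
    Finset.subset_inter (nbhd_mono E Finset.inter_subset_left)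
      (nbhd_mono E Finset.inter_subset_right)
  rw [nbhd_union, ← Finset.card_inter_add_card_union (nbhd E A) (nbhd E B)]
  exact Nat.add_le_add_right (Finset.card_le_card hinter) _

theorem surplus_inter_add_surplus_union_le (A B : Finset X) :
    surplus E (A ∩ B) + surplus E (A ∪ B) ≤ surplus E A + surplus E B := by
  have hN := card_nbhd_inter_add_card_nbhd_union_le E A B
  have hAB := Finset.card_inter_add_card_union A B
  simp only [surplus]
  omega

variable [Fintype X]

theorem eps_le_surplus {A : Finset X} (hA : nbhd E A ≠ Finset.univ) : eps E ≤ surplus E A := by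
  refine csInf_le ⟨-(Fintype.card X : ℤ), ?_⟩ ⟨A, hA, rfl⟩
  rintro d ⟨C, -, rfl⟩
  have := Finset.card_le_univ C
  omega

theorem isFragment_iff (A : Finset X) :
    IsFragment E A ↔ nbhd E A ≠ Finset.univ ∧ surplus E A = eps E :=
  Iff.rfl

end Fragments

theorem stmt13_general {X Y : Type*} [Fintype X] [Fintype Y] (E : X → Y → Prop)
    (A B : Finset X)
    (hA : IsFragment E A) (hB : IsFragment E B)
    (hN : nbhd E (A ∪ B) ≠ Finset.univ) :
    IsFragment E (A ∩ B) ∧ IsFragment E (A ∪ B) := by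
  simp only [isFragment_iff] at hA hB ⊢
  have hNinter : nbhd E (A ∩ B) ≠ Finset.univ := fun h =>
    hA.1 (Finset.univ_subset_iff.mp (h ▸ nbhd_mono E Finset.inter_subset_left))
  have hinter := eps_le_surplus E hNinter
  have hunion := eps_le_surplus E hN
  have hsub := surplus_inter_add_surplus_union_le E A B
  exact ⟨⟨hNinter, by linarith [hA.2, hB.2]⟩, ⟨hN, by linarith [hA.2, hB.2]⟩⟩

theorem stmt13 {X Y : Type*} [Fintype X] [Fintype Y] (E : X → Y → Prop)
    (hnc : ∃ x y, ¬ E x y) (A B : Finset X)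
    (hA : IsFragment E A) (hB : IsFragment E B)
    (hAB : (A ∩ B).Nonempty) (hN : nbhd E (A ∪ B) ≠ Finset.univ) :
    IsFragment E (A ∩ B) ∧ IsFragment E (A ∪ B) :=
  stmt13_general E A B hA hB hN
end
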